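/- The diameter of the cyclic Kautz digraph CK(d,3) with d ≥ 3 is 5 = 2ℓ−1. -/

import Mathlib

/-- Vertex of `CK(d,3)`: a triple with `x₁ ≠ x₂`, `x₂ ≠ x₃`, `x₁ ≠ x₃`. -/
abbrev ck3Vert {n : ℕ} (x : Fin 3 → Fin n) : Prop :=
  x 0 ≠ x 1 ∧ x 1 ≠ x 2 ∧ x 0 ≠ x 2

/-- Arc of `CK(d,3)`: `x₁x₂x₃ → x₂x₃y` with `y ≠ x₂, x₃`. -/
abbrev ck3Adj {n : ℕ} (x y : Fin 3 → Fin n) : Prop :=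
  y 0 = x 1 ∧ y 1 = x 2 ∧ y 2 ≠ x 1 ∧ y 2 ≠ x 2

/-- A walk of length `k` in `CK(d,3)` from `u` to `v`. -/
abbrev ck3Walk {n : ℕ} (k : ℕ) (u v : Fin 3 → Fin n) : Prop :=
  ∃ w : Fin (k + 1) → Fin 3 → Fin n, w 0 = u ∧ w (Fin.last k) = v ∧
    (∀ i, ck3Vert (w i)) ∧ ∀ i j : Fin (k + 1), j.val = i.val + 1 → ck3Adj (w i) (w j)

/-!
A walk of length `k` in `CK(d,3)` is the same as a word `s₀ s₁ … s_{k+2}` in which symbols at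
distance one or two differ. From `abc` to `pqr` the word `abcpqr` works unless `p ∈ {b, c}` or
`q = c`; in those cases two letters can be inserted, `abc t₁ t₂ pqr`, and with at least four
symbols they can always be chosen. From `abc` to `cba` no such word has length at most seven.
-/

section

variable {n : ℕ}

theorem exists_ne_ne_ne (hn : 4 ≤ n) (a b c : Fin n) : ∃ t, t ≠ a ∧ t ≠ b ∧ t ≠ c := by
  have hcard : ({a, b, c} : Finset (Fin n)).card < (Finset.univ : Finset (Fin n)).card := by
    grw [Finset.card_univ, Fintype.card_fin, Finset.card_le_three]
    omega
  obtain ⟨t, -, ht⟩ := Finset.exists_mem_notMem_of_card_lt_card hcard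
  simp only [Finset.mem_insert, Finset.mem_singleton, not_or] at ht
  exact ⟨t, ht⟩

theorem ck3Vert_of_injective {x : Fin 3 → Fin n} (hx : Function.Injective x) : ck3Vert x :=
  ⟨hx.ne (by decide), hx.ne (by decide), hx.ne (by decide)⟩

/-- A walk of length `k` visits the vertices `s i s(i+1) s(i+2)` for `i ≤ k`. -/
def IsCK3Word (k : ℕ) (s : ℕ → Fin n) : Prop :=
  (∀ i < k + 2, s i ≠ s (i + 1)) ∧ ∀ i < k + 1, s i ≠ s (i + 2)

def wordOfWalk {k : ℕ} (w : Fin (k + 1) → Fin 3 → Fin n) (i : ℕ) : Fin n :=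
  if h : i ≤ k then w ⟨i, by omega⟩ 0 else w (Fin.last k) (Fin.ofNat 3 (i - k))

theorem wordOfWalk_add {k : ℕ} {w : Fin (k + 1) → Fin 3 → Fin n}
    (ha : ∀ i j : Fin (k + 1), j.val = i.val + 1 → ck3Adj (w i) (w j)) :
    ∀ t, (ht : t < 3) → ∀ i : Fin (k + 1), wordOfWalk w (i + t) = w i ⟨t, ht⟩ := by
  intro t
  induction t with
  | zero => intro _ i; simp [wordOfWalk, i.is_le]
  | succ t ih =>
    intro ht i
    rcases i.is_le.lt_or_eq with hi | hi
    · have hadj := ha i ⟨i + 1, by omega⟩ rfl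
      have hnext : w ⟨i + 1, by omega⟩ ⟨t, by omega⟩ = w i ⟨t + 1, ht⟩ := by
        obtain rfl | rfl : t = 0 ∨ t = 1 := by omega
        exacts [hadj.1, hadj.2.1]
      rw [← hnext, ← ih (by omega)]
      congr 1
      dsimp only
      omega
    · obtain rfl : i = Fin.last k := Fin.ext hi
      simp only [wordOfWalk, Fin.val_last, dif_neg (show ¬ k + (t + 1) ≤ k by omega)]
      congr
      ext
      simp [Nat.mod_eq_of_lt ht]

theorem exists_word_of_ck3Walk {k : ℕ} {x y : Fin 3 → Fin n} (h : ck3Walk k x y) :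
    ∃ s, IsCK3Word k s ∧ (∀ t : Fin 3, s t = x t) ∧ ∀ t : Fin 3, s (k + t) = y t := by
  obtain ⟨w, rfl, rfl, hv, ha⟩ := h
  have hs := wordOfWalk_add ha
  refine ⟨wordOfWalk w, ⟨fun i hi => ?_, fun i hi => ?_⟩, fun t => ?_,
    fun t => hs t t.isLt (Fin.last k)⟩
  · rcases Nat.lt_succ_iff_lt_or_eq.mp hi with hi | rfl
    · rw [← add_zero i, hs 0 (by norm_num) ⟨i, hi⟩, add_assoc, hs 1 (by norm_num) ⟨i, hi⟩]
      exact (hv _).1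
    · have h1 := hs 1 (by norm_num) (Fin.last k)
      have h2 := hs 2 (by norm_num) (Fin.last k)
      rw [Fin.val_last] at h1 h2
      rw [h1, h2]
      exact (hv _).2.1
  · rw [← add_zero i, hs 0 (by norm_num) ⟨i, hi⟩, add_assoc, hs 2 (by norm_num) ⟨i, hi⟩]
    exact (hv _).2.2
  · simpa using hs t t.isLt 0

theorem ck3Walk_of_word {k : ℕ} {x y : Fin 3 → Fin n} {s : ℕ → Fin n} (hs : IsCK3Word k s)
    (hx : ∀ t : Fin 3, s t = x t) (hy : ∀ t : Fin 3, s (k + t) = y t) :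
    ck3Walk k x y := by
  obtain ⟨h1, h2⟩ := hs
  refine ⟨fun i t => s (i + t), funext fun t => by simpa using hx t, funext hy,
    fun i => ⟨?_, ?_, ?_⟩, fun i j hj => ⟨?_, ?_, ?_, ?_⟩⟩
  · simpa using h1 i (by omega)
  · simpa [add_assoc] using h1 (i + 1) (by omega)
  · simpa using h2 i (by omega)
  · simp [hj]
  · simp [hj, add_assoc]
  · simpa [hj, add_assoc] using (h2 (i + 1) (by omega)).symm
  · simpa [hj, add_assoc] using (h1 (i + 2) (by omega)).symm

theorem ck3Walk_iff_exists_word {k : ℕ} {x y : Fin 3 → Fin n} :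
    ck3Walk k x y ↔
      ∃ s, IsCK3Word k s ∧ (∀ t : Fin 3, s t = x t) ∧ ∀ t : Fin 3, s (k + t) = y t :=
  ⟨exists_word_of_ck3Walk, fun ⟨_, hs, hx, hy⟩ => ck3Walk_of_word hs hx hy⟩

theorem not_ck3Walk_comp_rev {x : Fin 3 → Fin n} (hx : ck3Vert x) {k : ℕ} (hk : k < 5) :
    ¬ ck3Walk k x (x ∘ Fin.rev) := by
  rw [ck3Walk_iff_exists_word]
  rintro ⟨s, ⟨h1, h2⟩, hs, hs'⟩
  have e0 : s 0 = x 0 := hs 0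
  have e1 : s 1 = x 1 := hs 1
  have e2 : s 2 = x 2 := hs 2
  have f0 : s k = x 2 := hs' 0
  have f1 : s (k + 1) = x 1 := hs' 1
  obtain ⟨-, h12, h02⟩ := hx
  interval_cases k
  · exact h02 (e0.symm.trans f0)
  · exact h12 (e1.symm.trans f0)
  · exact h2 1 (by norm_num) (e1.trans f1.symm)
  · exact h1 2 (by norm_num) (e2.trans f0.symm)
  · exact h2 2 (by norm_num) (e2.trans f0.symm)

theorem ck3Walk_three {x y : Fin 3 → Fin n} (hx : ck3Vert x) (hy : ck3Vert y)
    (hb : y 0 ≠ x 1) (hc : y 0 ≠ x 2) (hc' : y 1 ≠ x 2) : ck3Walk 3 x y := by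
  refine ck3Walk_of_word (s := fun i => [x 0, x 1, x 2, y 0, y 1, y 2].getD i (x 0))
    ⟨fun i hi => ?_, fun i hi => ?_⟩ (fun t => ?_) (fun t => ?_)
  · interval_cases i <;> simp_all [ne_comm]
  · interval_cases i <;> simp_all [ne_comm]
  · fin_cases t <;> rfl
  · fin_cases t <;> rfl

theorem ck3Walk_five {x y : Fin 3 → Fin n} (hx : ck3Vert x) (hy : ck3Vert y) {t₁ t₂ : Fin n}
    (h₁b : t₁ ≠ x 1) (h₁c : t₁ ≠ x 2) (h₁p : t₁ ≠ y 0) (h₂c : t₂ ≠ x 2) (h₂₁ : t₂ ≠ t₁)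
    (h₂p : t₂ ≠ y 0) (h₂q : t₂ ≠ y 1) : ck3Walk 5 x y := by
  refine ck3Walk_of_word
    (s := fun i => [x 0, x 1, x 2, t₁, t₂, y 0, y 1, y 2].getD i (x 0))
    ⟨fun i hi => ?_, fun i hi => ?_⟩ (fun t => ?_) (fun t => ?_)
  · interval_cases i <;> simp_all [ne_comm]
  · interval_cases i <;> simp_all [ne_comm]
  · fin_cases t <;> rfl
  · fin_cases t <;> rfl

theorem exists_ck3Walk_le_five (hn : 4 ≤ n) {x y : Fin 3 → Fin n} (hx : ck3Vert x)
    (hy : ck3Vert y) : ∃ k ≤ 5, ck3Walk k x y := by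
  by_cases hp : y 0 = x 1 ∨ y 0 = x 2
  · obtain ⟨t₂, h₂c, h₂p, h₂q⟩ := exists_ne_ne_ne hn (x 2) (y 0) (y 1)
    obtain ⟨t₁, h₁b, h₁c, h₁₂⟩ := exists_ne_ne_ne hn (x 1) (x 2) t₂
    have h₁p : t₁ ≠ y 0 := by rcases hp with hp | hp <;> rwa [hp]
    exact ⟨5, le_rfl, ck3Walk_five hx hy h₁b h₁c h₁p h₂c h₁₂.symm h₂p h₂q⟩
  by_cases hq : y 1 = x 2
  · obtain ⟨t₁, h₁b, h₁c, h₁p⟩ := exists_ne_ne_ne hn (x 1) (x 2) (y 0)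
    obtain ⟨t₂, h₂c, h₂₁, h₂p⟩ := exists_ne_ne_ne hn (x 2) t₁ (y 0)
    exact ⟨5, le_rfl, ck3Walk_five hx hy h₁b h₁c h₁p h₂c h₂₁ h₂p (hq ▸ h₂c)⟩
  obtain ⟨hb, hc⟩ := not_or.mp hp
  exact ⟨3, by norm_num, ck3Walk_three hx hy hb hc hq⟩

end

/-- The diameter of `CK(d,3)` with `d ≥ 3` is `5 = 2ℓ−1`: every ordered pair of
vertices is joined by a walk of length at most `5`, and some ordered pair of vertices
is joined by no walk of length less than `5`. -/
theorem stmt15 (d : ℕ) (hd : 3 ≤ d) :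
    (∀ x y : Fin 3 → Fin (d + 1), ck3Vert x → ck3Vert y →
      ∃ k ≤ 5, ck3Walk k x y) ∧
    ∃ x y : Fin 3 → Fin (d + 1), ck3Vert x ∧ ck3Vert y ∧
      ∀ k < 5, ¬ ck3Walk k x y := by
  have hinj : Function.Injective (Fin.castLE (by omega : 3 ≤ d + 1)) := Fin.castLE_injective _
  exact ⟨fun x y hx hy => exists_ck3Walk_le_five (by omega) hx hy,
    Fin.castLE _, Fin.castLE _ ∘ Fin.rev, ck3Vert_of_injective hinj,
    ck3Vert_of_injective (hinj.comp Fin.rev_injective),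
    fun _ hk => not_ck3Walk_comp_rev (ck3Vert_of_injective hinj) hk⟩
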